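/- Let μ ∈ P(X), 2 ≤ k ≤ K, and let c_pa(k) ∈ A_pa(k) be a cell. Then for every cell c_k ∈ A_k one has μ^{bA}(c_k | c_pa(k)) = μ(c_k | c_pa(k)). In particular, if G contains no colliders, then for every fully connected subset I ⊆ {1,...,K} and every cell c_I ∈ A_I one has μ^{bA}(c_I) = μ(c_I). -/

import Mathlib

open MeasureTheory Finset
open scoped ENNReal NNReal

noncomputable section

abbrev I01 : Type := unitInterval

def half : I01 := ⟨1 / 2, by norm_num⟩

/-- Index of the dyadic cell of side length `2^{-η}` containing `t ∈ [0,1]`. -/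
def cIdx (η : ℕ) (t : I01) : ℕ := min ⌊(t : ℝ) * 2 ^ η⌋₊ (2 ^ η - 1)

lemma cIdx_le_real (η : ℕ) (t : I01) : (cIdx η t : ℝ) ≤ 2 ^ η - 1 := by
  have h : cIdx η t ≤ 2 ^ η - 1 := min_le_right _ _
  have h1 : (1 : ℕ) ≤ 2 ^ η := Nat.one_le_two_pow
  calc (cIdx η t : ℝ) ≤ ((2 ^ η - 1 : ℕ) : ℝ) := by exact_mod_cast h
    _ = 2 ^ η - 1 := by rw [Nat.cast_sub h1]; push_cast; ring

/-- Midpoint of the dyadic cell of side length `2^{-η}` containing `t`. -/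
def cMid (η : ℕ) (t : I01) : I01 :=
  ⟨((cIdx η t : ℝ) + 1 / 2) / 2 ^ η, by
    constructor
    · positivity
    · rw [div_le_one (by positivity)]
      have := cIdx_le_real η t
      linarith⟩

/-- Order-1 Wasserstein distance (w.r.t. the given metric, infimum over couplings). -/
def Wass {α : Type*} [MeasurableSpace α] [PseudoMetricSpace α] (μ ν : Measure α) : ℝ :=
  sInf {r | ∃ π : Measure (α × α), π.map Prod.fst = μ ∧ π.map Prod.snd = ν ∧
    r = ∫ p, dist p.1 p.2 ∂π}

/-- Total variation distance, `sup { ∫ f dμ - ∫ f dν : f measurable, |f| ≤ 1/2 }`. -/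
def TVDist {α : Type*} [MeasurableSpace α] (μ ν : Measure α) : ℝ :=
  sSup {r | ∃ f : α → ℝ, Measurable f ∧ (∀ x, |f x| ≤ 1 / 2) ∧
    r = (∫ x, f x ∂μ) - ∫ x, f x ∂ν}

/-- Total variation norm of a signed measure, `sup { ∫ f dν : |f| ≤ 1/2 } = |ν|(univ)/2`. -/
def tvNorm {α : Type*} [MeasurableSpace α] (s : SignedMeasure α) : ℝ :=
  (s.totalVariation Set.univ).toReal / 2

/-- `m` conditioned on `s` (normalized restriction), Dirac at `x₀` if `m s = 0`. -/
def condOn {α : Type*} [MeasurableSpace α] (m : Measure α) (s : Set α) (x₀ : α) : Measure α :=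
  if m s = 0 then Measure.dirac x₀ else (m s)⁻¹ • m.restrict s

/-- Empirical measure of the sample `ω`. -/
def empOf {α : Type*} [MeasurableSpace α] (n : ℕ) (ω : Fin n → α) : Measure α :=
  (n : ℝ≥0∞)⁻¹ • ∑ i : Fin n, Measure.dirac (ω i)

/-- Law of `n` i.i.d. samples from `μ`. -/
def iid {α : Type*} [MeasurableSpace α] (n : ℕ) (μ : Measure α) : Measure (Fin n → α) :=
  Measure.pi fun _ => μ

section Graphical

variable {K : ℕ}

abbrev Coord (d : Fin K → ℕ) (k : Fin K) : Type := Fin (d k) → I01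
abbrev Pt (d : Fin K → ℕ) : Type := ∀ k : Fin K, Coord d k
abbrev PtOn (d : Fin K → ℕ) (I : Finset (Fin K)) : Type := ∀ j : I, Coord d j.1

def projOn (d : Fin K → ℕ) (I : Finset (Fin K)) (x : Pt d) : PtOn d I := fun j => x j.1

def restrOn (d : Fin K → ℕ) {I J : Finset (Fin K)} (h : I ⊆ J) (y : PtOn d J) : PtOn d I :=
  fun j => y ⟨j.1, h j.2⟩

def basePt (d : Fin K → ℕ) : Pt d := fun _ _ => half

/-- The cell of the partition of `X_I` into cubes of side length `2^{-η}` containing `x`. -/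
def cellOn (d : Fin K → ℕ) (η : ℕ) (I : Finset (Fin K)) (x : PtOn d I) : Set (PtOn d I) :=
  {y | ∀ j i, cIdx η (y j i) = cIdx η (x j i)}

/-- The cylinder over the cell of `A_I` containing the coordinates `x_I` of `x`. -/
def cylOf (d : Fin K → ℕ) (η : ℕ) (I : Finset (Fin K)) (x : Pt d) : Set (Pt d) :=
  {y | ∀ j ∈ I, ∀ i, cIdx η (y j i) = cIdx η (x j i)}

def midPtOn (d : Fin K → ℕ) (η : ℕ) (I : Finset (Fin K)) (x : PtOn d I) : PtOn d I :=
  fun j i => cMid η (x j i)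

def midPt (d : Fin K → ℕ) (η : ℕ) (x : Pt d) : Pt d := fun k i => cMid η (x k i)

/-- The DAG (given by its parent map) is topologically sorted. -/
def SortedGraph (pa : Fin K → Finset (Fin K)) : Prop := ∀ k, ∀ j ∈ pa k, j < k

/-- A set of nodes is fully connected (any two of its nodes are joined by an edge). -/
def FullConn (pa : Fin K → Finset (Fin K)) (I : Finset (Fin K)) : Prop :=
  ∀ i ∈ I, ∀ j ∈ I, i < j → i ∈ pa j

/-- The graph has no colliders: every parent set is fully connected. -/
def NoColliders (pa : Fin K → Finset (Fin K)) : Prop := ∀ k, FullConn pa (pa k)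

def below (k : Fin K) : Finset (Fin K) := Finset.univ.filter fun j => j < k
def uptoI (k : Fin K) : Finset (Fin K) := Finset.univ.filter fun j => j ≤ k
def preOf (pa : Fin K → Finset (Fin K)) (k : Fin K) : Finset (Fin K) := uptoI k \ pa k

def dpa (d : Fin K → ℕ) (pa : Fin K → Finset (Fin K)) (k : Fin K) : ℕ := ∑ j ∈ pa k, d j

def dloc (d : Fin K → ℕ) (pa : Fin K → Finset (Fin K)) : ℕ :=
  Finset.univ.sup fun k : Fin K => max 2 (d k) + dpa d pa k

def dmax (d : Fin K → ℕ) : ℕ := Finset.univ.sup fun k : Fin K => max 2 (d k)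

/-- `κ` is a regular conditional distribution of the coordinates in `J` given those in `I`,
under `μ`. -/
def IsCondD (d : Fin K → ℕ) (μ : Measure (Pt d)) (I J : Finset (Fin K))
    (κ : PtOn d I → Measure (PtOn d J)) : Prop :=
  Measurable κ ∧ (∀ y, IsProbabilityMeasure (κ y)) ∧
    ∀ (A : Set (PtOn d I)) (B : Set (PtOn d J)), MeasurableSet A → MeasurableSet B →
      μ {x | projOn d I x ∈ A ∧ projOn d J x ∈ B} = ∫⁻ y in A, κ y B ∂(μ.map (projOn d I))

/-- `μ ∈ P_G`: for each node, some conditional distribution of `x_k` given all earlier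
coordinates factors through the parent coordinates only. -/
def MemPG (d : Fin K → ℕ) (pa : Fin K → Finset (Fin K)) (μ : Measure (Pt d)) : Prop :=
  ∀ k : Fin K, ∃ κ : PtOn d (pa k) → Measure (PtOn d ({k} : Finset (Fin K))),
    IsCondD d μ (below k ∪ pa k) {k}
      fun y => κ (restrOn d (fun _ hj => Finset.mem_union_right _ hj) y)

/-- Wasserstein-Lipschitz kernel assumption with constant `L`. -/
def WLip (d : Fin K → ℕ) (pa : Fin K → Finset (Fin K)) (L : ℝ) (μ : Measure (Pt d)) : Prop :=
  ∀ k : Fin K, 1 ≤ k.1 →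
    ∃ κ : PtOn d (pa k) → Measure (PtOn d ({k} : Finset (Fin K))),
      IsCondD d μ (pa k) {k} κ ∧
        ∀ x x' : PtOn d (pa k), Wass (κ x) (κ x') ≤ L * dist x x'

/-- Total-variation-Lipschitz kernel assumption with constant `L`. -/
def TVLip (d : Fin K → ℕ) (pa : Fin K → Finset (Fin K)) (L : ℝ) (μ : Measure (Pt d)) : Prop :=
  ∀ k : Fin K, 1 ≤ k.1 →
    (∃ κ : PtOn d (pa k) → Measure (PtOn d ({k} : Finset (Fin K))),
      IsCondD d μ (pa k) {k} κ ∧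
        ∀ x x', TVDist (κ x) (κ x') ≤ L * dist x x') ∧
    (∃ κ : PtOn d (pa k) → Measure (PtOn d (preOf pa k)),
      IsCondD d μ (pa k) (preOf pa k) κ ∧
        ∀ x x', TVDist (κ x) (κ x') ≤ L * dist x x') ∧
    (∃ κ : PtOn d ({k} : Finset (Fin K)) → Measure (PtOn d (pa k)),
      IsCondD d μ {k} (pa k) κ ∧
        ∀ x x', TVDist (κ x) (κ x') ≤ L * dist x x')

/-- Iterated construction of the graph product measure `∏_k κ_k(dx_k | x_pa(k))`. -/
def chainM (d : Fin K → ℕ) (pa : Fin K → Finset (Fin K))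
    (κ : ∀ k : Fin K, PtOn d (pa k) → Measure (PtOn d ({k} : Finset (Fin K)))) :
    ℕ → Measure (Pt d)
  | 0 => Measure.dirac (basePt d)
  | n + 1 =>
      if h : n < K then
        (chainM d pa κ n).bind fun x =>
          (κ ⟨n, h⟩ (projOn d (pa ⟨n, h⟩) x)).map fun y =>
            Function.update x ⟨n, h⟩ (y ⟨⟨n, h⟩, Finset.mem_singleton_self _⟩)
      else chainM d pa κ n

def graphProd (d : Fin K → ℕ) (pa : Fin K → Finset (Fin K))
    (κ : ∀ k : Fin K, PtOn d (pa k) → Measure (PtOn d ({k} : Finset (Fin K)))) :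
    Measure (Pt d) := chainM d pa κ K

/-- Completion of `x ∈ X_pa(k)` to a point of `X` (cell midpoints on `pa k`, `1/2` elsewhere). -/
def extendPt (d : Fin K → ℕ) (pa : Fin K → Finset (Fin K)) (η : ℕ) (k : Fin K)
    (x : PtOn d (pa k)) : Pt d :=
  fun j => if h : j ∈ pa k then (fun i => cMid η (x ⟨j, h⟩ i)) else fun _ => half

/-- The measure `ν^A` built from a choice `κ` of conditional kernels of `ν`. -/
def opA (d : Fin K → ℕ) (pa : Fin K → Finset (Fin K)) (η : ℕ) (ν : Measure (Pt d))
    (κ : ∀ k : Fin K, PtOn d (pa k) → Measure (PtOn d ({k} : Finset (Fin K)))) :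
    Measure (Pt d) :=
  graphProd d pa fun k x =>
    (condOn (ν.map (projOn d (pa k))) (cellOn d η (pa k) x) (midPtOn d η (pa k) x)).bind (κ k)

/-- The canonical (kernel-choice free) version of `ν^A`. -/
def opACanon (d : Fin K → ℕ) (pa : Fin K → Finset (Fin K)) (η : ℕ) (ν : Measure (Pt d)) :
    Measure (Pt d) :=
  graphProd d pa fun k x =>
    (condOn ν (projOn d (pa k) ⁻¹' cellOn d η (pa k) x) (extendPt d pa η k x)).map
      (projOn d ({k} : Finset (Fin K)))

/-- The kernel `μ^{bA}(dx_k | x_pa(k)) = Σ_{c_k} μ(c_k | c_pa(k)(x_pa(k))) μ_{k|c_k}(dx_k)`. -/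
def kerBA (d : Fin K → ℕ) (pa : Fin K → Finset (Fin K)) (η : ℕ) (μ : Measure (Pt d))
    (k : Fin K) (x : PtOn d (pa k)) : Measure (PtOn d ({k} : Finset (Fin K))) :=
  (((condOn μ (projOn d (pa k) ⁻¹' cellOn d η (pa k) x) (extendPt d pa η k x)).map
      (projOn d ({k} : Finset (Fin K)))).bind) fun z =>
    condOn (μ.map (projOn d ({k} : Finset (Fin K)))) (cellOn d η {k} z) (midPtOn d η {k} z)

/-- The measure `μ^{bA}`. -/
def opBA (d : Fin K → ℕ) (pa : Fin K → Finset (Fin K)) (η : ℕ) (μ : Measure (Pt d)) :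
    Measure (Pt d) := graphProd d pa (kerBA d pa η μ)

/-- The midpoint projection `μ^M` of `μ^{bA}`. -/
def opM (d : Fin K → ℕ) (pa : Fin K → Finset (Fin K)) (η : ℕ) (μ : Measure (Pt d)) :
    Measure (Pt d) := (opBA d pa η μ).map (midPt d η)

/-- The kernel of `μ^M` built from the conditional kernel `κ` of `μ`:
cell-average of `κ`, pushed to cell midpoints. -/
def kerM (d : Fin K → ℕ) (pa : Fin K → Finset (Fin K)) (η : ℕ) (μ : Measure (Pt d)) (k : Fin K)
    (κ : PtOn d (pa k) → Measure (PtOn d ({k} : Finset (Fin K)))) (y : PtOn d (pa k)) :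
    Measure (PtOn d ({k} : Finset (Fin K))) :=
  ((condOn (μ.map (projOn d (pa k))) (cellOn d η (pa k) y) (midPtOn d η (pa k) y)).bind κ).map
    (midPtOn d η ({k} : Finset (Fin K)))

/-- `m(dx_k | c_pa(k)(x))`: `m` conditioned on the parent cell of `x`, projected to node `k`. -/
def cellCondProj (d : Fin K → ℕ) (pa : Fin K → Finset (Fin K)) (η : ℕ) (m : Measure (Pt d))
    (k : Fin K) (x : Pt d) : Measure (PtOn d ({k} : Finset (Fin K))) :=
  (condOn m (projOn d (pa k) ⁻¹' cellOn d η (pa k) (projOn d (pa k) x)) (midPt d η x)).map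
    (projOn d ({k} : Finset (Fin K)))

/-- Minimax risk `V_Q(n)` for estimating a measure in `Q` from `n` i.i.d. samples,
in Wasserstein distance. -/
def minimax (d : Fin K → ℕ) (Q : Set (Measure (Pt d))) (n : ℕ) : ℝ :=
  ⨅ E : {E : (Fin n → Pt d) → Measure (Pt d) // Measurable E},
    ⨆ μ : Q, ∫ ω, Wass (μ : Measure (Pt d)) (E.1 ω) ∂(iid n (μ : Measure (Pt d)))

/-- Number of directed paths of length `ℓ` starting at `k` (following edge directions). -/
def pathCount (pa : Fin K → Finset (Fin K)) : ℕ → Fin K → ℕ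
  | 0, _ => 1
  | ℓ + 1, k => ∑ j ∈ Finset.univ.filter (fun j => k ∈ pa j), pathCount pa ℓ j

/-- The constant `M_{L,k} = 1 + Σ_{ℓ=1}^K a_{k,ℓ} L^ℓ`. -/
def MConst (pa : Fin K → Finset (Fin K)) (L : ℝ) (k : Fin K) : ℝ :=
  1 + ∑ ℓ ∈ Finset.Icc 1 K, (pathCount pa ℓ k : ℝ) * L ^ ℓ

/-- Lebesgue measure on `[0,1]^d = Π_k Π_i [0,1]`. -/
def lebPt (d : Fin K → ℕ) : Measure (Pt d) :=
  Measure.pi fun k => Measure.pi fun _ : Fin (d k) => (volume : Measure ℝ).comap Subtype.val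

/-- Product of the (one-node) marginals of `ν`. -/
def prodMarg (d : Fin K → ℕ) (ν : Measure (Pt d)) : Measure (Pt d) :=
  Measure.pi fun k => ν.map fun x => x k

/-- Cell average `f^ν` of `f` w.r.t. the product of the marginals of `ν`. -/
def fAvg (d : Fin K → ℕ) (η : ℕ) (ν : Measure (Pt d)) (f : Pt d → ℝ) (x : Pt d) : ℝ :=
  if prodMarg d ν (cylOf d η Finset.univ x) = 0 then 0
  else (∫ y in cylOf d η Finset.univ x, f y ∂prodMarg d ν) /
    (prodMarg d ν (cylOf d η Finset.univ x)).toReal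

/-- Combining points over two disjoint blocks of nodes. -/
def glue (d : Fin K → ℕ) {J J' : Finset (Fin K)} (p : PtOn d J × PtOn d J') :
    PtOn d (J ∪ J') := fun j =>
  if h : j.1 ∈ J then p.1 ⟨j.1, h⟩
  else p.2 ⟨j.1, by
    rcases Finset.mem_union.mp j.2 with h' | h'
    · exact absurd h' h
    · exact h'⟩

/-- `X_J` and `X_J'` are conditionally independent given `X_I` under `μ`. -/
def CondIndepOn (d : Fin K → ℕ) (μ : Measure (Pt d)) (I J J' : Finset (Fin K)) : Prop :=
  ∃ (κJ : PtOn d I → Measure (PtOn d J)) (κJ' : PtOn d I → Measure (PtOn d J')),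
    IsCondD d μ I J κJ ∧ IsCondD d μ I J' κJ' ∧
      IsCondD d μ I (J ∪ J') fun y => ((κJ y).prod (κJ' y)).map (glue d)

/-- The set `P_CI` of probability measures all of whose disjoint coordinate blocks are
conditionally independent given any disjoint nonempty block. -/
def PCI (d : Fin K → ℕ) : Set (Measure (Pt d)) :=
  {μ | IsProbabilityMeasure μ ∧
    ∀ I J J' : Finset (Fin K), I.Nonempty → Disjoint I J → Disjoint I J' → Disjoint J J' →
      CondIndepOn d μ I J J'}

end Graphical

section TwoBlocks

abbrev Vec (m : ℕ) : Type := Fin m → I01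

def cellV (η : ℕ) {m : ℕ} (x : Vec m) : Set (Vec m) :=
  {y | ∀ i, cIdx η (y i) = cIdx η (x i)}

def midV (η : ℕ) {m : ℕ} (x : Vec m) : Vec m := fun i => cMid η (x i)

/-- `ν^A` for two blocks and the graph `1 → 2`. -/
def opA2 {m₁ m₂ : ℕ} (η : ℕ) (ν : Measure (Vec m₁ × Vec m₂)) : Measure (Vec m₁ × Vec m₂) :=
  ν.bind fun p =>
    ((condOn ν (Prod.fst ⁻¹' cellV η p.1) (midV η p.1, midV η p.2)).map Prod.snd).map
      fun y => (p.1, y)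

/-- `μ^{bA}` for two blocks:  `Σ_{c₁,c₂} μ(c₁ × c₂) (μ_{1|c₁} ⊗ μ_{2|c₂})`. -/
def opBA2 {m₁ m₂ : ℕ} (η : ℕ) (μ : Measure (Vec m₁ × Vec m₂)) : Measure (Vec m₁ × Vec m₂) :=
  μ.bind fun p =>
    (condOn (μ.map Prod.fst) (cellV η p.1) (midV η p.1)).prod
      (condOn (μ.map Prod.snd) (cellV η p.2) (midV η p.2))

/-- The kernel `μ^{bA}(dx₂ | x₁) = Σ_{c₂} μ(c₂ | c₁(x₁)) μ_{2|c₂}(dx₂)`. -/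
def kerBA2 {m₁ m₂ : ℕ} (η : ℕ) (μ : Measure (Vec m₁ × Vec m₂)) (x₁ : Vec m₁) :
    Measure (Vec m₂) :=
  (((condOn μ (Prod.fst ⁻¹' cellV η x₁) (midV η x₁, fun _ => half)).map Prod.snd).bind) fun z =>
    condOn (μ.map Prod.snd) (cellV η z) (midV η z)

/-- `κ` is a conditional distribution of the second block given the first, under `μ`. -/
def IsCD2 {m₁ m₂ : ℕ} (μ : Measure (Vec m₁ × Vec m₂)) (κ : Vec m₁ → Measure (Vec m₂)) : Prop :=
  Measurable κ ∧ (∀ x, IsProbabilityMeasure (κ x)) ∧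
    ∀ (A : Set (Vec m₁)) (B : Set (Vec m₂)), MeasurableSet A → MeasurableSet B →
      μ (A ×ˢ B) = ∫⁻ x in A, κ x B ∂(μ.map Prod.fst)

end TwoBlocks

end

/-!
For the kernel, `μ_{k|c'}` gives the cell `c_k` mass one when `c' = c_k` and zero otherwise, so
mixing over `μ(· | c_pa(k))` returns `μ(c_k | c_pa(k))`.

For a fully connected `I`, add the nodes one at a time. When node `k ∈ I` is added, the other
nodes of `I` are parents of `k`, so the mass of the cylinder over `c_I` becomes the integral of
`μ(c_I | c_pa(k))` against the law of the parent cells built so far. By induction that law is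
the one under `μ`, because `pa(k)` is itself fully connected when `G` has no colliders, and the
law of total probability gives `μ(c_I)`.
-/

section CondOn

variable {α : Type*} [MeasurableSpace α] {m : Measure α} {s t : Set α} {x₀ : α}

instance isProbabilityMeasure_condOn [IsFiniteMeasure m] :
    IsProbabilityMeasure (condOn m s x₀) := by
  unfold condOn
  split_ifs with h
  · infer_instance
  · constructor
    rw [Measure.smul_apply, Measure.restrict_apply_univ, smul_eq_mul,
      ENNReal.inv_mul_cancel h (measure_ne_top m s)]

lemma condOn_apply_of_subset [IsFiniteMeasure m] (hx₀ : x₀ ∈ s) (hst : s ⊆ t) :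
    condOn m s x₀ t = 1 := by
  unfold condOn
  split_ifs with h
  · exact Measure.dirac_apply_of_mem (hst hx₀)
  · rw [Measure.smul_apply, Measure.restrict_apply_superset hst, smul_eq_mul,
      ENNReal.inv_mul_cancel h (measure_ne_top m s)]

lemma condOn_apply_of_disjoint (hx₀ : x₀ ∈ s) (hst : Disjoint s t) (ht : MeasurableSet t) :
    condOn m s x₀ t = 0 := by
  unfold condOn
  split_ifs
  · rw [Measure.dirac_apply' _ ht, Set.indicator_of_notMem (hst.notMem_of_mem_left hx₀)]
  · rw [Measure.smul_apply, Measure.restrict_apply ht, hst.symm.inter_eq, measure_empty,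
      smul_zero]

lemma condOn_apply_inter_of_subset {A : Set α} (hx₀ : x₀ ∈ s) (hsA : s ⊆ A)
    (hA : MeasurableSet A) : condOn m s x₀ (A ∩ t) = condOn m s x₀ t := by
  rw [Set.inter_comm, measure_inter_conull]
  exact condOn_apply_of_disjoint hx₀ (Set.disjoint_compl_right_iff_subset.mpr hsA) hA.compl

lemma setLIntegral_condOn [IsFiniteMeasure m] (x₀ : α → α) (ht : MeasurableSet t) :
    ∫⁻ y in s, condOn m s (x₀ y) t ∂m = m (t ∩ s) := by
  by_cases h : m s = 0
  · rw [Measure.restrict_eq_zero.mpr h, lintegral_zero_measure,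
      measure_mono_null Set.inter_subset_right h]
  · simp only [condOn, if_neg h, Measure.smul_apply, Measure.restrict_apply ht, smul_eq_mul]
    rw [setLIntegral_const, mul_right_comm, ENNReal.inv_mul_cancel h (measure_ne_top m s),
      one_mul]

/-- The law of total probability over the countable partition into the fibres of `q`. -/
lemma lintegral_condOn_fiber {β : Type*} [MeasurableSpace β] [Countable β]
    [MeasurableSingletonClass β] [IsFiniteMeasure m] {q : α → β} (hq : Measurable q)
    (x₀ : α → α) (ht : MeasurableSet t) :
    ∫⁻ y, condOn m (q ⁻¹' {q y}) (x₀ y) t ∂m = m t := by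
  have hfib : ∀ b, MeasurableSet (q ⁻¹' {b}) := fun b => hq (measurableSet_singleton b)
  have hdisj : Pairwise (Function.onFun Disjoint fun b => q ⁻¹' {b}) := fun b b' h =>
    (Set.disjoint_singleton.mpr h).preimage q
  have hcover : (⋃ b, q ⁻¹' {b}) = Set.univ := by
    rw [← Set.preimage_iUnion, Set.iUnion_of_singleton, Set.preimage_univ]
  calc ∫⁻ y, condOn m (q ⁻¹' {q y}) (x₀ y) t ∂m
      = ∑' b, ∫⁻ y in q ⁻¹' {b}, condOn m (q ⁻¹' {q y}) (x₀ y) t ∂m := by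
        rw [← lintegral_iUnion hfib hdisj, hcover, Measure.restrict_univ]
    _ = ∑' b, m (t ∩ q ⁻¹' {b}) := by
        refine tsum_congr fun b => ?_
        rw [← setLIntegral_condOn x₀ ht]
        refine setLIntegral_congr_fun (hfib b) fun y hy => ?_
        rw [Set.mem_singleton_iff.mp (Set.mem_preimage.mp hy)]
    _ = m t := by
        rw [← measure_iUnion (fun b b' h => (hdisj h).mono Set.inter_subset_right
            Set.inter_subset_right) fun b => ht.inter (hfib b),
          ← Set.inter_iUnion, hcover, Set.inter_univ]

end CondOn

section FactorsThrough

variable {α β γ : Type*} [MeasurableSpace α] [MeasurableSpace β] [Countable β]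
  [MeasurableSingletonClass β] {q : α → β}

lemma Function.FactorsThrough.measurable [MeasurableSpace γ] [Nonempty γ] {f : α → γ}
    (hf : f.FactorsThrough q) (hq : Measurable q) : Measurable f := by
  rw [← hf.extend_comp fun _ => Classical.arbitrary γ]
  exact (measurable_of_countable _).comp hq

lemma Function.FactorsThrough.lintegral_eq_of_map_eq {f : α → ℝ≥0∞} (hf : f.FactorsThrough q)
    (hq : Measurable q) {μ ν : Measure α} (h : μ.map q = ν.map q) :
    ∫⁻ y, f y ∂μ = ∫⁻ y, f y ∂ν := by
  rw [← hf.extend_comp (0 : β → ℝ≥0∞)]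
  simp only [Function.comp_apply]
  rw [← lintegral_map (measurable_of_countable _) hq, h,
    lintegral_map (measurable_of_countable _) hq]

end FactorsThrough

lemma Measurable.measure_map_prodMk {α β γ : Type*} [MeasurableSpace α] [MeasurableSpace β]
    [MeasurableSpace γ] {κ : α → Measure β} (hκ : Measurable κ)
    [hκ₁ : ∀ a, IsProbabilityMeasure (κ a)] {g : α × β → γ} (hg : Measurable g) :
    Measurable fun a => (κ a).map fun b => g (a, b) := by
  let k : ProbabilityTheory.Kernel α β := ⟨κ, hκ⟩
  have : ProbabilityTheory.IsMarkovKernel k := ⟨hκ₁⟩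
  refine Measure.measurable_of_measurable_coe _ fun s hs => ?_
  have hmap : ∀ a, (κ a).map (fun b => g (a, b)) s = k a (Prod.mk a ⁻¹' (g ⁻¹' s)) :=
    fun a => Measure.map_apply (hg.comp measurable_prodMk_left) hs
  simp_rw [hmap]
  exact ProbabilityTheory.Kernel.measurable_kernel_prodMk_left (κ := k) (hg hs)

lemma measurable_cIdx (η : ℕ) : Measurable (cIdx η) :=
  ((measurable_subtype_coe.mul_const _).nat_floor).min measurable_const

lemma cMid_congr {η : ℕ} {s t : I01} (h : cIdx η s = cIdx η t) : cMid η s = cMid η t :=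
  Subtype.ext (by simp only [cMid, h])

lemma cIdx_cMid (η : ℕ) (t : I01) : cIdx η (cMid η t) = cIdx η t := by
  have hmul : (cMid η t : ℝ) * 2 ^ η = cIdx η t + 1 / 2 := by
    simp only [cMid]
    field_simp
  have hfloor : ⌊(cMid η t : ℝ) * 2 ^ η⌋₊ = cIdx η t := by
    rw [hmul, Nat.floor_eq_iff (by positivity)]
    constructor <;> linarith
  rw [cIdx, hfloor]
  exact min_eq_left (min_le_right _ _)

section Cells

variable {K : ℕ} (d : Fin K → ℕ) (η : ℕ)

noncomputable def cellIndex (J : Finset (Fin K)) (x : PtOn d J) : ∀ j : J, Fin (d j) → ℕ :=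
  fun j i => cIdx η (x j i)

variable {d}

lemma measurable_projOn (J : Finset (Fin K)) : Measurable (projOn d J) :=
  measurable_pi_lambda _ fun j => measurable_pi_apply j.1

lemma measurable_cellIndex (J : Finset (Fin K)) : Measurable (cellIndex d η J) :=
  measurable_pi_lambda _ fun j => measurable_pi_lambda _ fun i =>
    (measurable_cIdx η).comp ((measurable_pi_apply i).comp (measurable_pi_apply j))

lemma cellOn_eq_preimage (J : Finset (Fin K)) (x : PtOn d J) :
    cellOn d η J x = cellIndex d η J ⁻¹' {cellIndex d η J x} := by
  ext y
  simp only [cellOn, cellIndex, Set.mem_ofPred_eq, Set.mem_preimage, Set.mem_singleton_iff,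
    funext_iff]

lemma cylOf_eq_preimage (J : Finset (Fin K)) (x : Pt d) :
    cylOf d η J x = projOn d J ⁻¹' cellOn d η J (projOn d J x) := by
  ext y
  simp only [cylOf, cellOn, projOn, Set.mem_ofPred_eq, Set.mem_preimage, Subtype.forall]

lemma measurableSet_cellOn (J : Finset (Fin K)) (x : PtOn d J) :
    MeasurableSet (cellOn d η J x) := by
  rw [cellOn_eq_preimage]
  exact measurable_cellIndex η J (measurableSet_singleton _)

lemma measurableSet_cylOf (J : Finset (Fin K)) (x : Pt d) : MeasurableSet (cylOf d η J x) := by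
  rw [cylOf_eq_preimage]
  exact measurable_projOn J (measurableSet_cellOn η J _)

lemma cellOn_eq_of_cellIndex_eq {J : Finset (Fin K)} {x y : PtOn d J}
    (h : cellIndex d η J x = cellIndex d η J y) : cellOn d η J x = cellOn d η J y := by
  rw [cellOn_eq_preimage, cellOn_eq_preimage, h]

lemma midPtOn_mem_cellOn (J : Finset (Fin K)) (x : PtOn d J) :
    midPtOn d η J x ∈ cellOn d η J x :=
  fun j i => cIdx_cMid η (x j i)

lemma midPtOn_eq_of_cellIndex_eq {J : Finset (Fin K)} {x y : PtOn d J}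
    (h : cellIndex d η J x = cellIndex d η J y) : midPtOn d η J x = midPtOn d η J y :=
  funext fun j => funext fun i => cMid_congr (congrFun (congrFun h j) i)

lemma cylOf_union (I J : Finset (Fin K)) (x : Pt d) :
    cylOf d η (I ∪ J) x = cylOf d η I x ∩ cylOf d η J x := by
  ext y
  simp only [cylOf, Set.mem_ofPred_eq, Set.mem_inter_iff, Finset.mem_union]
  exact ⟨fun h => ⟨fun j hj => h j (Or.inl hj), fun j hj => h j (Or.inr hj)⟩,
    fun h j hj => hj.elim (h.1 j) (h.2 j)⟩

lemma cylOf_erase_inter_cylOf_singleton {J : Finset (Fin K)} {k : Fin K} (hk : k ∈ J)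
    (x : Pt d) : cylOf d η (J.erase k) x ∩ cylOf d η {k} x = cylOf d η J x := by
  rw [← cylOf_union, Finset.union_comm, ← Finset.insert_eq, Finset.insert_erase hk]

lemma mem_cylOf_iff_of_mem_cylOf {I J : Finset (Fin K)} (hIJ : I ⊆ J) {x y z : Pt d}
    (hz : z ∈ cylOf d η J y) : z ∈ cylOf d η I x ↔ y ∈ cylOf d η I x :=
  forall₂_congr fun j hj => forall_congr' fun i => by rw [hz j (hIJ hj) i]

end Cells

section Kernel

variable {K : ℕ} {d : Fin K → ℕ} (pa : Fin K → Finset (Fin K)) (η : ℕ) (μ : Measure (Pt d))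

lemma condOn_cellOn_apply_cellOn {J : Finset (Fin K)} (ν : Measure (PtOn d J))
    [IsFiniteMeasure ν] (z z' : PtOn d J) :
    condOn ν (cellOn d η J z') (midPtOn d η J z') (cellOn d η J z)
      = (cellOn d η J z).indicator 1 z' := by
  by_cases hz : cellIndex d η J z' = cellIndex d η J z
  · have hz' : z' ∈ cellOn d η J z := by rw [cellOn_eq_preimage]; exact hz
    rw [Set.indicator_of_mem hz', Pi.one_apply]
    exact condOn_apply_of_subset (midPtOn_mem_cellOn η J z')
      (cellOn_eq_of_cellIndex_eq η hz).subset
  · have hz' : z' ∉ cellOn d η J z := by rw [cellOn_eq_preimage]; exact hz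
    rw [Set.indicator_of_notMem hz']
    refine condOn_apply_of_disjoint (midPtOn_mem_cellOn η J z') ?_ (measurableSet_cellOn η J z)
    rw [cellOn_eq_preimage, cellOn_eq_preimage]
    exact (Set.disjoint_singleton.mpr hz).preimage _

lemma measurable_condOn_cellOn {J : Finset (Fin K)} (ν : Measure (PtOn d J)) :
    Measurable fun z => condOn ν (cellOn d η J z) (midPtOn d η J z) :=
  Function.FactorsThrough.measurable (q := cellIndex d η J)
    (fun _ _ h => by rw [cellOn_eq_of_cellIndex_eq η h, midPtOn_eq_of_cellIndex_eq η h])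
    (measurable_cellIndex η J)

lemma kerBA_apply_cellOn [IsFiniteMeasure μ] (k : Fin K) (xp : PtOn d (pa k))
    (z : PtOn d ({k} : Finset (Fin K))) :
    kerBA d pa η μ k xp (cellOn d η {k} z)
      = ((condOn μ (projOn d (pa k) ⁻¹' cellOn d η (pa k) xp) (extendPt d pa η k xp)).map
          (projOn d ({k} : Finset (Fin K)))) (cellOn d η {k} z) := by
  rw [kerBA, Measure.bind_apply (measurableSet_cellOn η _ z)
    (measurable_condOn_cellOn η _).aemeasurable]
  simp_rw [condOn_cellOn_apply_cellOn]
  exact lintegral_indicator_one (measurableSet_cellOn η _ z)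

lemma extendPt_eq_of_cellIndex_eq {k : Fin K} {x y : PtOn d (pa k)}
    (h : cellIndex d η (pa k) x = cellIndex d η (pa k) y) :
    extendPt d pa η k x = extendPt d pa η k y := by
  funext j i
  unfold extendPt
  split_ifs with hj
  · exact cMid_congr (congrFun (congrFun h ⟨j, hj⟩) i)
  · rfl

lemma projOn_extendPt_mem_cellOn (k : Fin K) (x : PtOn d (pa k)) :
    projOn d (pa k) (extendPt d pa η k x) ∈ cellOn d η (pa k) x := by
  intro j i
  simp only [projOn, extendPt, dif_pos j.2]
  exact cIdx_cMid η _

lemma measurable_kerBA (k : Fin K) : Measurable (kerBA d pa η μ k) :=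
  Function.FactorsThrough.measurable (q := cellIndex d η (pa k))
    (fun _ _ h => by
      rw [kerBA, kerBA, cellOn_eq_of_cellIndex_eq η h, extendPt_eq_of_cellIndex_eq pa η h])
    (measurable_cellIndex η _)

instance isProbabilityMeasure_kerBA [IsFiniteMeasure μ] (k : Fin K) (x : PtOn d (pa k)) :
    IsProbabilityMeasure (kerBA d pa η μ k x) :=
  have := Measure.isProbabilityMeasure_map
    (μ := condOn μ (projOn d (pa k) ⁻¹' cellOn d η (pa k) x) (extendPt d pa η k x))
    (measurable_projOn (d := d) {k}).aemeasurable
  isProbabilityMeasure_bind (measurable_condOn_cellOn η _).aemeasurable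
    (ae_of_all _ fun _ => inferInstance)

end Kernel

section Chain

variable {K : ℕ} {d : Fin K → ℕ}

def updateNode (y : Pt d) (k : Fin K) (v : PtOn d ({k} : Finset (Fin K))) : Pt d :=
  Function.update y k (v ⟨k, Finset.mem_singleton_self k⟩)

lemma measurable_updateNode (k : Fin K) :
    Measurable fun p : Pt d × PtOn d ({k} : Finset (Fin K)) => updateNode p.1 k p.2 :=
  measurable_update'.comp (f := fun p : Pt d × PtOn d ({k} : Finset (Fin K)) =>
    (p.1, p.2 ⟨k, Finset.mem_singleton_self k⟩)) (by fun_prop)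

lemma updateNode_mem_cylOf {η : ℕ} {J : Finset (Fin K)} {k : Fin K} {x y : Pt d}
    {v : PtOn d ({k} : Finset (Fin K))} :
    updateNode y k v ∈ cylOf d η J x ↔
      y ∈ cylOf d η (J.erase k) x ∧ (k ∈ J → v ∈ cellOn d η {k} (projOn d {k} x)) := by
  constructor
  · intro h
    refine ⟨fun j hj i => ?_, fun hk ⟨j, hj⟩ i => ?_⟩
    · have := h j (Finset.mem_of_mem_erase hj) i
      rwa [updateNode, Function.update_of_ne (Finset.ne_of_mem_erase hj)] at this
    · obtain rfl := Finset.mem_singleton.mp hj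
      have := h j hk i
      rwa [updateNode, Function.update_self] at this
  · rintro ⟨hy, hv⟩ j hj i
    by_cases hjk : j = k
    · subst hjk
      rw [updateNode, Function.update_self]
      exact hv hj ⟨j, Finset.mem_singleton_self j⟩ i
    · rw [updateNode, Function.update_of_ne hjk]
      exact hy j (Finset.mem_erase.mpr ⟨hjk, hj⟩) i

variable (pa : Fin K → Finset (Fin K)) (η : ℕ)
  {κ : ∀ k : Fin K, PtOn d (pa k) → Measure (PtOn d ({k} : Finset (Fin K)))}
  [∀ k x, IsProbabilityMeasure (κ k x)]

lemma chainM_succ_apply (hκ : ∀ k, Measurable (κ k)) {n : ℕ} (h : n < K) {B : Set (Pt d)}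
    (hB : MeasurableSet B) :
    chainM d pa κ (n + 1) B
      = ∫⁻ y, κ ⟨n, h⟩ (projOn d (pa ⟨n, h⟩) y) (updateNode y ⟨n, h⟩ ⁻¹' B)
          ∂chainM d pa κ n := by
  have hmeas := Measurable.measure_map_prodMk (κ := fun y => κ ⟨n, h⟩ (projOn d (pa ⟨n, h⟩) y))
    ((hκ ⟨n, h⟩).comp (measurable_projOn (pa ⟨n, h⟩))) (measurable_updateNode ⟨n, h⟩)
  rw [chainM, dif_pos h]
  exact (Measure.bind_apply hB hmeas.aemeasurable).trans
    (lintegral_congr fun y => Measure.map_apply (f := updateNode y ⟨n, h⟩)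
      ((measurable_updateNode _).comp measurable_prodMk_left) hB)

lemma chainM_succ_cylOf_of_notMem (hκ : ∀ k, Measurable (κ k)) {n : ℕ} (h : n < K)
    {J : Finset (Fin K)} (hk : (⟨n, h⟩ : Fin K) ∉ J) (x : Pt d) :
    chainM d pa κ (n + 1) (cylOf d η J x) = chainM d pa κ n (cylOf d η J x) := by
  rw [chainM_succ_apply pa hκ h (measurableSet_cylOf η J x),
    ← lintegral_indicator_one (measurableSet_cylOf η J x)]
  refine lintegral_congr fun y => ?_
  by_cases hy : y ∈ cylOf d η J x
  · have hpre : updateNode y ⟨n, h⟩ ⁻¹' cylOf d η J x = Set.univ :=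
      Set.eq_univ_of_forall fun _ => updateNode_mem_cylOf.mpr
        ⟨by rwa [Finset.erase_eq_of_notMem hk], fun hk' => absurd hk' hk⟩
    rw [hpre, measure_univ, Set.indicator_of_mem hy, Pi.one_apply]
  · have hpre : updateNode y ⟨n, h⟩ ⁻¹' cylOf d η J x = ∅ :=
      Set.eq_empty_of_forall_notMem fun _ hv => hy <| by
        simpa only [Finset.erase_eq_of_notMem hk] using (updateNode_mem_cylOf.mp hv).1
    rw [hpre, measure_empty, Set.indicator_of_notMem hy]

lemma chainM_succ_cylOf_of_mem (hκ : ∀ k, Measurable (κ k)) {n : ℕ} (h : n < K)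
    {J : Finset (Fin K)} (hk : (⟨n, h⟩ : Fin K) ∈ J) (x : Pt d) :
    chainM d pa κ (n + 1) (cylOf d η J x)
      = ∫⁻ y in cylOf d η (J.erase ⟨n, h⟩) x, κ ⟨n, h⟩ (projOn d (pa ⟨n, h⟩) y)
          (cellOn d η {⟨n, h⟩} (projOn d {⟨n, h⟩} x)) ∂chainM d pa κ n := by
  rw [chainM_succ_apply pa hκ h (measurableSet_cylOf η J x),
    ← lintegral_indicator (measurableSet_cylOf η _ x)]
  refine lintegral_congr fun y => ?_
  by_cases hy : y ∈ cylOf d η (J.erase ⟨n, h⟩) x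
  · have hpre : updateNode y ⟨n, h⟩ ⁻¹' cylOf d η J x
        = cellOn d η {⟨n, h⟩} (projOn d {⟨n, h⟩} x) :=
      Set.ext fun _ =>
        updateNode_mem_cylOf.trans ⟨fun hv => hv.2 hk, fun hv => ⟨hy, fun _ => hv⟩⟩
    rw [hpre, Set.indicator_of_mem hy]
  · have hpre : updateNode y ⟨n, h⟩ ⁻¹' cylOf d η J x = ∅ :=
      Set.eq_empty_of_forall_notMem fun _ hv => hy (updateNode_mem_cylOf.mp hv).1
    rw [hpre, measure_empty, Set.indicator_of_notMem hy]

end Chain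

section CellMarginals

variable {K : ℕ} {d : Fin K → ℕ} (pa : Fin K → Finset (Fin K)) (η : ℕ) (μ : Measure (Pt d))

lemma indicator_kerBA_eq_condOn [IsFiniteMeasure μ] {J : Finset (Fin K)} {k : Fin K}
    (hk : k ∈ J) (hJ : J.erase k ⊆ pa k) (x y : Pt d) :
    (cylOf d η (J.erase k) x).indicator
        (fun y => kerBA d pa η μ k (projOn d (pa k) y) (cellOn d η {k} (projOn d {k} x))) y
      = condOn μ (cylOf d η (pa k) y) (extendPt d pa η k (projOn d (pa k) y))
          (cylOf d η J x) := by
  have he : extendPt d pa η k (projOn d (pa k) y) ∈ cylOf d η (pa k) y := by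
    rw [cylOf_eq_preimage]
    exact projOn_extendPt_mem_cellOn pa η k _
  rw [← cylOf_erase_inter_cylOf_singleton η hk]
  by_cases hy : y ∈ cylOf d η (J.erase k) x
  · rw [Set.indicator_of_mem hy, kerBA_apply_cellOn, Measure.map_apply (measurable_projOn _)
      (measurableSet_cellOn η _ _), ← cylOf_eq_preimage, ← cylOf_eq_preimage,
      condOn_apply_inter_of_subset he (fun z hz => (mem_cylOf_iff_of_mem_cylOf η hJ hz).mpr hy)
        (measurableSet_cylOf η _ x)]
  · rw [Set.indicator_of_notMem hy, eq_comm]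
    refine measure_mono_null Set.inter_subset_left (condOn_apply_of_disjoint he ?_
      (measurableSet_cylOf η _ x))
    exact Set.disjoint_left.mpr fun z hz hz' => hy ((mem_cylOf_iff_of_mem_cylOf η hJ hz).mp hz')

lemma chainM_kerBA_succ_cylOf_of_mem [IsFiniteMeasure μ] {n : ℕ} (h : n < K)
    {J : Finset (Fin K)} (hk : (⟨n, h⟩ : Fin K) ∈ J) (hJ : J.erase ⟨n, h⟩ ⊆ pa ⟨n, h⟩)
    (hpa : ∀ y, chainM d pa (kerBA d pa η μ) n (cylOf d η (pa ⟨n, h⟩) y)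
      = μ (cylOf d η (pa ⟨n, h⟩) y)) (x : Pt d) :
    chainM d pa (kerBA d pa η μ) (n + 1) (cylOf d η J x) = μ (cylOf d η J x) := by
  rw [chainM_succ_cylOf_of_mem pa η (measurable_kerBA pa η μ) h hk,
    ← lintegral_indicator (measurableSet_cylOf η _ x)]
  set k : Fin K := ⟨n, h⟩
  set q : Pt d → (∀ j : pa k, Fin (d j) → ℕ) := cellIndex d η (pa k) ∘ projOn d (pa k)
  have hq : Measurable q := (measurable_cellIndex η _).comp (measurable_projOn _)
  have hfib : ∀ y, cylOf d η (pa k) y = q ⁻¹' {q y} := fun y => by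
    rw [cylOf_eq_preimage, cellOn_eq_preimage]
    rfl
  have hmap : (chainM d pa (kerBA d pa η μ) n).map q = μ.map q := by
    refine Measure.ext_of_singleton fun s => ?_
    rw [Measure.map_apply hq (measurableSet_singleton s),
      Measure.map_apply hq (measurableSet_singleton s)]
    rcases (q ⁻¹' {s}).eq_empty_or_nonempty with hs | ⟨y, hy⟩
    · rw [hs, measure_empty, measure_empty]
    · rw [← Set.mem_singleton_iff.mp hy, ← hfib]
      exact hpa y
  have hF : Function.FactorsThrough (fun y => condOn μ (cylOf d η (pa k) y)
      (extendPt d pa η k (projOn d (pa k) y)) (cylOf d η J x)) q := fun y y' hyy' => by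
    dsimp only
    rw [hfib, hfib y', hyy', extendPt_eq_of_cellIndex_eq pa η hyy']
  simp_rw [indicator_kerBA_eq_condOn pa η μ hk hJ]
  rw [hF.lintegral_eq_of_map_eq hq hmap]
  simp_rw [hfib]
  exact lintegral_condOn_fiber hq _ (measurableSet_cylOf η J x)

lemma chainM_kerBA_cylOf [IsProbabilityMeasure μ] (hs : SortedGraph pa)
    (hnc : NoColliders pa) {n : ℕ} (hn : n ≤ K) {J : Finset (Fin K)} (hJ : FullConn pa J)
    (hJn : ∀ j ∈ J, j.1 < n) (x : Pt d) :
    chainM d pa (kerBA d pa η μ) n (cylOf d η J x) = μ (cylOf d η J x) := by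
  induction n generalizing J x with
  | zero =>
    have hcyl : cylOf d η J x = Set.univ :=
      Set.eq_univ_of_forall fun _ j hj => absurd (hJn j hj) (Nat.not_lt_zero _)
    rw [hcyl, chainM, measure_univ, measure_univ]
  | succ n ih =>
    have h : n < K := hn
    have hlt : ∀ j ∈ J, j ≠ ⟨n, h⟩ → j.1 < n := fun j hj hjn =>
      lt_of_le_of_ne (Nat.lt_succ_iff.mp (hJn j hj)) fun e => hjn (Fin.ext e)
    by_cases hk : (⟨n, h⟩ : Fin K) ∈ J
    · refine chainM_kerBA_succ_cylOf_of_mem pa η μ h hk (fun j hj => ?_)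
        (fun y => ih h.le (hnc _) (fun j hj => hs _ j hj) y) x
      exact hJ j (Finset.mem_of_mem_erase hj) _ hk
        (hlt j (Finset.mem_of_mem_erase hj) (Finset.ne_of_mem_erase hj))
    · rw [chainM_succ_cylOf_of_notMem pa η (measurable_kerBA pa η μ) h hk]
      exact ih h.le hJ (fun j hj => hlt j hj fun e => hk (e ▸ hj)) x

end CellMarginals

/-- Lemma: `μ^{bA}` is well defined.
For `2 ≤ k ≤ K` and cells `c_pa(k)`, `c_k`, one has
`μ^{bA}(c_k | c_pa(k)) = μ(c_k | c_pa(k))`; in particular, if `G` has no colliders, then for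
every fully connected `I` and every cell `c_I` one has `μ^{bA}(c_I) = μ(c_I)`. -/
theorem stmt9 {K : ℕ} (d : Fin K → ℕ) (pa : Fin K → Finset (Fin K)) (η : ℕ)
    (μ : Measure (Pt d)) (hμ : IsProbabilityMeasure μ) :
    (∀ k : Fin K, 1 ≤ k.1 → ∀ (xp : PtOn d (pa k)) (z : PtOn d ({k} : Finset (Fin K))),
      kerBA d pa η μ k xp (cellOn d η {k} z)
        = ((condOn μ (projOn d (pa k) ⁻¹' cellOn d η (pa k) xp) (extendPt d pa η k xp)).map
            (projOn d ({k} : Finset (Fin K)))) (cellOn d η {k} z)) ∧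
    (SortedGraph pa → NoColliders pa →
      ∀ I : Finset (Fin K), FullConn pa I → ∀ x : Pt d,
        opBA d pa η μ (cylOf d η I x) = μ (cylOf d η I x)) :=
  ⟨fun k _ xp z => kerBA_apply_cellOn pa η μ k xp z,
    fun hs hnc _ hI x => chainM_kerBA_cylOf pa η μ hs hnc le_rfl hI (fun j _ => j.isLt) x⟩
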